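/- arXiv:2406.13525 — 2 statements merged into one kernel-verified Lean document; each statement's English description precedes it below -/
import Mathlib

section
/- For a symmetric positive definite d×d real matrix B, the Frobenius inner product of B − B⁻¹ with B − I is nonnegative: (B − B⁻¹) : (B − I) ≥ 0. -/
open Matrix Finset

/-- Frobenius inner product of two real matrices. -/
noncomputable def frob {d : ℕ} (X Y : Matrix (Fin d) (Fin d) ℝ) : ℝ :=
  ∑ i, ∑ j, X i j * Y i j

theorem frob_sub_inv_sub_one_nonneg {d : ℕ}
    (B : Matrix (Fin d) (Fin d) ℝ) (hBs : B.IsSymm) (hB : B.PosDef) :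
    0 ≤ frob (B - B⁻¹) (B - 1) := by
  have hH := hB.1
  set U : Matrix (Fin d) (Fin d) ℝ := (hH.eigenvectorUnitary : Matrix (Fin d) (Fin d) ℝ) with hU
  set μ : Fin d → ℝ := hH.eigenvalues with hμ
  have hμpos : ∀ i, 0 < μ i := hB.eigenvalues_pos
  have hUunit : U ∈ Matrix.unitaryGroup (Fin d) ℝ := hH.eigenvectorUnitary.2
  have hUs : star U * U = 1 := (Matrix.mem_unitaryGroup_iff').mp hUunit
  have hUss : U * star U = 1 := (Matrix.mem_unitaryGroup_iff).mp hUunit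
  have hUinv : U⁻¹ = star U := Matrix.inv_eq_left_inv hUs
  have hsUinv : (star U)⁻¹ = U := Matrix.inv_eq_left_inv hUss
  have hspec : B = U * Matrix.diagonal μ * star U := by
    have h := hH.spectral_theorem
    have : (RCLike.ofReal ∘ μ : Fin d → ℝ) = μ := by funext i; rfl
    rwa [this] at h
  have hBinv : B⁻¹ = U * Matrix.diagonal (fun i => (μ i)⁻¹) * star U := by
    apply Matrix.inv_eq_left_inv
    rw [hspec]
    calc U * Matrix.diagonal (fun i => (μ i)⁻¹) * star U * (U * Matrix.diagonal μ * star U)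
        = U * Matrix.diagonal (fun i => (μ i)⁻¹) * (star U * U) * Matrix.diagonal μ * star U := by
          noncomm_ring
      _ = U * (Matrix.diagonal (fun i => (μ i)⁻¹) * Matrix.diagonal μ) * star U := by
          rw [hUs]; noncomm_ring
      _ = 1 := by
          rw [Matrix.diagonal_mul_diagonal]
          have : (fun i => (μ i)⁻¹ * μ i) = fun _ => (1 : ℝ) := by
            funext i; exact inv_mul_cancel₀ (ne_of_gt (hμpos i))
          rw [this, Matrix.diagonal_one, mul_one, hUss]
  -- rewrite frob as a trace
  have hfrob : frob (B - B⁻¹) (B - 1) = Matrix.trace ((B - B⁻¹) * (B - 1)) := by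
    have hsymm : (B - B⁻¹)ᵀ = B - B⁻¹ := by
      have h1 : Bᵀ = B := hBs
      have h2 : (B⁻¹)ᵀ = B⁻¹ := by rw [Matrix.transpose_nonsing_inv, h1]
      rw [Matrix.transpose_sub, h1, h2]
    calc frob (B - B⁻¹) (B - 1) = Matrix.trace ((B - B⁻¹)ᵀ * (B - 1)) := by
          simp only [frob, Matrix.trace, Matrix.diag, Matrix.mul_apply,
            Matrix.transpose_apply]
          rw [Finset.sum_comm]
      _ = Matrix.trace ((B - B⁻¹) * (B - 1)) := by rw [hsymm]
  rw [hfrob]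
  have hone : (1 : Matrix (Fin d) (Fin d) ℝ) = U * Matrix.diagonal (fun _ => (1:ℝ)) * star U := by
    simp [hUss]
  have key : (B - B⁻¹) * (B - 1)
      = U * Matrix.diagonal (fun i => (μ i - (μ i)⁻¹) * (μ i - 1)) * star U := by
    rw [hBinv, hspec]
    nth_rewrite 1 [hone]
    rw [← Matrix.sub_mul, ← Matrix.mul_sub, ← Matrix.sub_mul, ← Matrix.mul_sub,
      Matrix.diagonal_sub, Matrix.diagonal_sub]
    calc U * Matrix.diagonal (fun i => μ i - (μ i)⁻¹) * star U *
          (U * Matrix.diagonal (fun i => μ i - 1) * star U)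
        = U * Matrix.diagonal (fun i => μ i - (μ i)⁻¹) * (star U * U) *
          Matrix.diagonal (fun i => μ i - 1) * star U := by
          noncomm_ring
      _ = U * (Matrix.diagonal (fun i => μ i - (μ i)⁻¹) *
          Matrix.diagonal (fun i => μ i - 1)) * star U := by
          rw [hUs]; noncomm_ring
      _ = _ := by rw [Matrix.diagonal_mul_diagonal]
  rw [key]
  rw [Matrix.trace_mul_cycle, hUs, one_mul, Matrix.trace_diagonal]
  apply Finset.sum_nonneg
  intro i _
  have hp := hμpos i
  have hinv : μ i * (μ i)⁻¹ = 1 := mul_inv_cancel₀ (ne_of_gt hp)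
  nlinarith [sq_nonneg (μ i - 1), sq_nonneg (μ i + 1), mul_pos hp hp]
end

section
/- For a symmetric d×d matrix B and δ ∈ (0,1), the Frobenius inner product satisfies (B − [B]_δ⁻¹) : ([B]_δ − I) ≥ ([B]_δ^{1/2} − [B]_δ^{−1/2}) : ([B]_δ^{1/2} − [B]_δ^{−1/2}), i.e., (B − [B]_δ⁻¹) : ([B]_δ − I) ≥ ‖[B]_δ^{1/2} − [B]_δ^{−1/2}‖_F². -/
/-!
Diagonalising `B` and `[B]_δ` in the same orthonormal basis reduces both Frobenius products to
sums over the eigenvalues. For one eigenvalue `s` with `m = max s δ > 0` the difference of the two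
sides is exactly `(s - 1) * (m - 1)`, which is nonnegative because `δ ≤ 1` forces `m ≤ 1` whenever
`s ≤ 1`, and `m = s` otherwise.
-/

open Matrix Finset

lemma sub_inv_mul_sub_one_sub_sq_sqrt (s : ℝ) {m : ℝ} (hm : 0 < m) :
    (s - m⁻¹) * (m - 1) - (√m - (√m)⁻¹) ^ 2 = (s - 1) * (m - 1) := by
  have hsqrt : √m ^ 2 = m := Real.sq_sqrt hm.le
  have hsqrt_ne : √m ≠ 0 := (Real.sqrt_pos.mpr hm).ne'
  field_simp
  rw [hsqrt]
  ring

lemma sub_one_mul_max_sub_one_nonneg (s : ℝ) {δ : ℝ} (hδ : δ ≤ 1) :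
    0 ≤ (s - 1) * (max s δ - 1) := by
  rcases le_total s 1 with hs | hs
  · exact mul_nonneg_of_nonpos_of_nonpos (by linarith) (by simp [hs, hδ])
  · rw [max_eq_left (hδ.trans hs)]
    nlinarith

lemma mul_self_sqrt_max_sub_inv_le {δ : ℝ} (hδ : δ ∈ Set.Ioo (0 : ℝ) 1) (s : ℝ) :
    (√(max s δ) - (√(max s δ))⁻¹) * (√(max s δ) - (√(max s δ))⁻¹) ≤
      (s - (max s δ)⁻¹) * (max s δ - 1) := by
  have hm : 0 < max s δ := lt_max_of_lt_right hδ.1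
  have := sub_inv_mul_sub_one_sub_sq_sqrt s hm
  nlinarith [sub_one_mul_max_sub_one_nonneg s hδ.2.le]

section OrthogonalConjugation

variable {n R : Type*} [Fintype n] [DecidableEq n] [CommRing R]

lemma conj_diagonal_sub (Q : Matrix n n R) (f g : n → R) :
    Q * diagonal f * Qᵀ - Q * diagonal g * Qᵀ = Q * diagonal (f - g) * Qᵀ := by
  rw [← Matrix.sub_mul, ← Matrix.mul_sub, diagonal_sub]; rfl

lemma conj_diagonal_one {Q : Matrix n n R} (hQ : Qᵀ * Q = 1) : Q * diagonal 1 * Qᵀ = 1 := by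
  simpa using mul_eq_one_comm.mp hQ

lemma conj_diagonal_mul_conj_diagonal {Q : Matrix n n R} (hQ : Qᵀ * Q = 1) (f g : n → R) :
    Q * diagonal f * Qᵀ * (Q * diagonal g * Qᵀ) = Q * diagonal (f * g) * Qᵀ := by
  calc Q * diagonal f * Qᵀ * (Q * diagonal g * Qᵀ)
      = Q * diagonal f * (Qᵀ * Q) * diagonal g * Qᵀ := by simp only [Matrix.mul_assoc]
    _ = Q * diagonal (f * g) * Qᵀ := by
      rw [hQ, Matrix.mul_one, Matrix.mul_assoc Q, diagonal_mul_diagonal]; rfl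

lemma inv_conj_diagonal {K : Type*} [Field K] {Q : Matrix n n K} (hQ : Qᵀ * Q = 1)
    {f : n → K} (hf : ∀ i, f i ≠ 0) :
    (Q * diagonal f * Qᵀ)⁻¹ = Q * diagonal f⁻¹ * Qᵀ := by
  apply inv_eq_right_inv
  rw [conj_diagonal_mul_conj_diagonal hQ, ← conj_diagonal_one hQ]
  congr 3
  funext i
  exact mul_inv_cancel₀ (hf i)

end OrthogonalConjugation

lemma frob_eq_trace_mul_transpose {d : ℕ} (X Y : Matrix (Fin d) (Fin d) ℝ) :
    frob X Y = trace (X * Yᵀ) := by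
  simp [frob, trace, mul_apply]

lemma frob_conj_diagonal {d : ℕ} {Q : Matrix (Fin d) (Fin d) ℝ} (hQ : Qᵀ * Q = 1)
    (f g : Fin d → ℝ) :
    frob (Q * diagonal f * Qᵀ) (Q * diagonal g * Qᵀ) = ∑ i, f i * g i := by
  have hsymm : (Q * diagonal g * Qᵀ)ᵀ = Q * diagonal g * Qᵀ := by
    simp [transpose_mul, Matrix.mul_assoc]
  rw [frob_eq_trace_mul_transpose, hsymm, conj_diagonal_mul_conj_diagonal hQ, trace_mul_comm,
    ← Matrix.mul_assoc, hQ, Matrix.one_mul, trace_diagonal]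
  rfl

theorem cutoff_matrix_relaxation_general {d : ℕ} (δ : ℝ) (hδ : δ ∈ Set.Ioo (0 : ℝ) 1)
    (B Q : Matrix (Fin d) (Fin d) ℝ) (dvec : Fin d → ℝ)
    (hQ : Qᵀ * Q = 1)
    (hspec : B = Q * Matrix.diagonal dvec * Qᵀ) :
    let Bδ := Q * Matrix.diagonal (fun i => max (dvec i) δ) * Qᵀ
    let Bδhalf := Q * Matrix.diagonal (fun i => Real.sqrt (max (dvec i) δ)) * Qᵀ
    frob (Bδhalf - Bδhalf⁻¹) (Bδhalf - Bδhalf⁻¹) ≤ frob (B - Bδ⁻¹) (Bδ - 1) := by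
  intro Bδ Bδhalf
  have hpos : ∀ i, 0 < max (dvec i) δ := fun _ => lt_max_of_lt_right hδ.1
  have hBδ_inv : Bδ⁻¹ = Q * diagonal (fun i => max (dvec i) δ)⁻¹ * Qᵀ :=
    inv_conj_diagonal hQ fun i => (hpos i).ne'
  have hBδhalf_inv : Bδhalf⁻¹ = Q * diagonal (fun i => √(max (dvec i) δ))⁻¹ * Qᵀ :=
    inv_conj_diagonal hQ fun i => (Real.sqrt_pos.mpr (hpos i)).ne'
  rw [hBδhalf_inv, hBδ_inv, hspec, ← conj_diagonal_one hQ, conj_diagonal_sub, conj_diagonal_sub,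
    conj_diagonal_sub, frob_conj_diagonal hQ, frob_conj_diagonal hQ]
  exact sum_le_sum fun i _ => mul_self_sqrt_max_sub_inv_le hδ (dvec i)

/-- Regularized relaxation dissipation estimate: with `[B]_δ` the spectral
eigenvalue cut-off of the symmetric matrix `B`,
`(B − [B]_δ⁻¹) : ([B]_δ − I) ≥ ‖[B]_δ^{1/2} − [B]_δ^{−1/2}‖_F²`. -/
theorem cutoff_matrix_relaxation {d : ℕ} (δ : ℝ) (hδ : δ ∈ Set.Ioo (0 : ℝ) 1)
    (B Q : Matrix (Fin d) (Fin d) ℝ) (dvec : Fin d → ℝ)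
    (hBs : B.IsSymm) (hQ : Qᵀ * Q = 1)
    (hspec : B = Q * Matrix.diagonal dvec * Qᵀ) :
    let Bδ := Q * Matrix.diagonal (fun i => max (dvec i) δ) * Qᵀ
    let Bδhalf := Q * Matrix.diagonal (fun i => Real.sqrt (max (dvec i) δ)) * Qᵀ
    frob (Bδhalf - Bδhalf⁻¹) (Bδhalf - Bδhalf⁻¹) ≤ frob (B - Bδ⁻¹) (Bδ - 1) :=
  cutoff_matrix_relaxation_general δ hδ B Q dvec hQ hspec
end
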